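/- Let g_1, …, g_k be pairwise distinct monic irreducible polynomials in F_q[X] with nonzero constant terms, let b_i ≥ 1, and let s = s_1 + ⋯ + s_k and s'' = s_1' + ⋯ + s_k' where s_i, s_i' ∈ Ω(g_i^{b_i}) are nonzero and e_i denotes the least period of s_i. Then: (a) for every integer ℓ ≥ 0, L^ℓ s = s'' if and only if L^ℓ s_i = s_i' for every i; and (b) s and s'' are shift equivalent if and only if there exist integers ℓ_1, …, ℓ_k ≥ 0 such that L^{ℓ_i} s_i = s_i' for every i and gcd(e_i, e_j) divides ℓ_i − ℓ_j for all 1 ≤ i, j ≤ k. -/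

import Mathlib

open Polynomial

/-- The (left) shift operator `L` on sequences over `F`, as an `F`-linear endomorphism. -/
def shiftL (F : Type*) [CommSemiring F] : Module.End F (ℕ → F) where
  toFun s := fun i => s (i + 1)
  map_add' _ _ := rfl
  map_smul' _ _ := rfl

/-- For a polynomial `f`, the operator `f(L)` on sequences. -/
noncomputable def polyL {F : Type*} [CommSemiring F] (f : Polynomial F) :
    Module.End F (ℕ → F) :=
  Polynomial.aeval (shiftL F) f

/-- `Ω(f)`: the set of sequences annihilated by `f(L)`. -/
def OmegaSet {F : Type*} [CommSemiring F] (f : Polynomial F) : Set (ℕ → F) :=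
  {s | polyL f s = 0}

/-- Two sequences are shift equivalent if one is a shift of the other. -/
def ShiftEquiv {F : Type*} [CommSemiring F] (s s' : ℕ → F) : Prop :=
  ∃ ℓ : ℕ, s' = (shiftL F ^ ℓ) s

/-- The cycle (shift-equivalence class) of a sequence. -/
def seqCycle {F : Type*} [CommSemiring F] (s : ℕ → F) : Set (ℕ → F) :=
  {s' | ∃ ℓ : ℕ, s' = (shiftL F ^ ℓ) s}

/-- `N` is the least period of the sequence `s`. -/
def IsLeastPeriod {F : Type*} (s : ℕ → F) (N : ℕ) : Prop :=
  0 < N ∧ (∀ i, s (i + N) = s i) ∧ ∀ M : ℕ, 0 < M → (∀ i, s (i + M) = s i) → N ≤ M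

/-- `h` is the minimal polynomial of the sequence `s`: it is monic, annihilates `s`,
and divides every polynomial annihilating `s`. -/
def IsMinPolyOfSeq {F : Type*} [CommSemiring F] (s : ℕ → F) (h : Polynomial F) : Prop :=
  h.Monic ∧ polyL h s = 0 ∧ ∀ h' : Polynomial F, polyL h' s = 0 → h ∣ h'

/-- `e = ord(f)`: the least `N ≥ 1` with `f ∣ X^N - 1`. -/
def IsOrderOf {F : Type*} [CommRing F] (f : Polynomial F) (e : ℕ) : Prop :=
  0 < e ∧ f ∣ X ^ e - 1 ∧ ∀ N : ℕ, 0 < N → f ∣ X ^ N - 1 → e ≤ N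

/-! Pairwise coprime polynomials `fᵢ` have independent kernels `Ω(fᵢ)`, each stable under the
shift, so `L^ℓ (∑ sᵢ) = ∑ sᵢ'` splits into the componentwise equations: this is (a). For (b),
a shift equivalence yields a common exponent `ℓᵢ = ℓ`; conversely, since `sᵢ` is `eᵢ`-periodic,
it suffices to find one `n` with `n ≡ ℓᵢ (mod eᵢ)` for all `i`, and the Chinese remainder theorem
for non-coprime moduli provides it when the `ℓᵢ` agree modulo every `gcd(eᵢ, eⱼ)`. -/

theorem Nat.gcd_lcm_dvd_lcm_gcd (a b c : ℕ) : gcd (lcm a b) c ∣ lcm (gcd a c) (gcd b c) := by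
  rcases eq_or_ne a 0 with rfl | ha
  · simp [dvd_lcm_left]
  rcases eq_or_ne b 0 with rfl | hb
  · simp [dvd_lcm_right]
  rcases eq_or_ne c 0 with rfl | hc
  · simp
  have hgac : gcd a c ≠ 0 := gcd_ne_zero_right hc
  have hgbc : gcd b c ≠ 0 := gcd_ne_zero_right hc
  rw [← factorization_le_iff_dvd (gcd_ne_zero_right hc) (lcm_ne_zero hgac hgbc),
    factorization_gcd (lcm_ne_zero ha hb) hc, factorization_lcm ha hb,
    factorization_lcm hgac hgbc, factorization_gcd ha hc, factorization_gcd hb hc]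
  intro p
  simp only [Finsupp.inf_apply, Finsupp.sup_apply]
  exact (min_max_distrib_right _ _ _).le

theorem Nat.ModEq.gcd_finset_lcm {ι : Type*} [DecidableEq ι] {s : Finset ι} {e : ι → ℕ}
    {c x y : ℕ} (h : ∀ i ∈ s, x ≡ y [MOD gcd (e i) c]) : x ≡ y [MOD gcd (s.lcm e) c] := by
  induction s using Finset.induction with
  | empty => simp [Nat.modEq_one]
  | insert j s _ ih =>
    simp only [Finset.forall_mem_insert] at h
    rw [Finset.lcm_insert]
    exact (Nat.mod_lcm h.1 (ih h.2)).of_dvd (Nat.gcd_lcm_dvd_lcm_gcd _ _ _)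

theorem Nat.exists_modEq_of_modEq_gcd {ι : Type*} (s : Finset ι) (e a : ι → ℕ)
    (h : ∀ i ∈ s, ∀ j ∈ s, a i ≡ a j [MOD gcd (e i) (e j)]) :
    ∃ n, ∀ i ∈ s, n ≡ a i [MOD e i] := by
  classical
  induction s using Finset.induction with
  | empty => exact ⟨0, by simp⟩
  | insert j s _ ih =>
    simp only [Finset.forall_mem_insert] at h ih ⊢
    obtain ⟨n, hn⟩ := ih fun i hi k hk => h.2 i hi |>.2 k hk
    have hnj : n ≡ a j [MOD gcd (s.lcm e) (e j)] :=
      Nat.ModEq.gcd_finset_lcm fun i hi =>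
        ((hn i hi).of_dvd (gcd_dvd_left _ _)).trans (h.2 i hi).1
    obtain ⟨m, hms, hmj⟩ := Nat.chineseRemainder' hnj
    exact ⟨m, hmj, fun i hi => (hms.of_dvd (Finset.dvd_lcm hi)).trans (hn i hi)⟩

theorem iSupIndep.eq_of_sum_eq_sum {R N ι : Type*} [Ring R] [AddCommGroup N] [Module R N]
    [Fintype ι] {p : ι → Submodule R N} (hp : iSupIndep p) {v w : ι → N}
    (hv : ∀ i, v i ∈ p i) (hw : ∀ i, w i ∈ p i) (hvw : ∑ i, v i = ∑ i, w i) : v = w := by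
  funext i
  refine sub_eq_zero.mp <| (iSupIndep_iff_finsetSum_eq_zero_imp_eq_zero p).mp hp Finset.univ
    (v - w) (fun j _ => sub_mem (hv j) (hw j)) ?_ i (Finset.mem_univ i)
  simp only [Pi.sub_apply, Finset.sum_sub_distrib, hvw, sub_self]

theorem Polynomial.iSupIndep_ker_aeval {R M ι : Type*} [CommRing R] [AddCommGroup M] [Module R M]
    (φ : Module.End R M) {f : ι → R[X]} (hf : Pairwise fun i j => IsCoprime (f i) (f j)) :
    iSupIndep fun i => LinearMap.ker (aeval φ (f i)) := by
  classical
  rw [iSupIndep_iff_supIndep]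
  intro s
  rw [Finset.supIndep_iff_disjoint_erase]
  intro i _
  refine (disjoint_ker_aeval_of_isCoprime φ (q := ∏ j ∈ s.erase i, f j)
    (IsCoprime.prod_right fun j hj => hf (Finset.ne_of_mem_erase hj).symm)).mono_right ?_
  refine Finset.sup_le fun j hj => ?_
  rw [← Finset.prod_erase_mul _ f hj, aeval_mul, Module.End.mul_eq_comp]
  exact LinearMap.ker_le_ker_comp _ _

theorem Polynomial.isCoprime_of_irreducible_of_monic {K : Type*} [Field K] {p q : K[X]}
    (hp : Irreducible p) (hq : Irreducible q) (hpm : p.Monic) (hqm : q.Monic) (hpq : p ≠ q) :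
    IsCoprime p q :=
  hp.coprime_iff_not_dvd.mpr fun h =>
    hpq (eq_of_monic_of_associated hpm hqm (hp.associated_of_dvd hq h))

section LinearRecurringSequences

variable {F : Type*} [CommRing F]

theorem shiftL_pow_apply (s : ℕ → F) (ℓ n : ℕ) : (shiftL F ^ ℓ) s n = s (n + ℓ) := by
  induction ℓ generalizing n with
  | zero => rfl
  | succ ℓ ih =>
    rw [pow_succ', Module.End.mul_apply]
    exact (ih (n + 1)).trans (congrArg s (by omega))

theorem Function.Periodic.shiftL_pow_eq {s : ℕ → F} {e m n : ℕ} (hs : Function.Periodic s e)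
    (h : m ≡ n [MOD e]) : (shiftL F ^ m) s = (shiftL F ^ n) s := by
  funext i
  rw [shiftL_pow_apply, shiftL_pow_apply, ← hs.map_mod_nat, ← hs.map_mod_nat (i + n)]
  exact congrArg s (h.add_left i)

theorem commute_polyL_shiftL_pow (f : F[X]) (ℓ : ℕ) : Commute (polyL f) (shiftL F ^ ℓ) := by
  simpa only [polyL, map_pow, aeval_X] using (Commute.all f (X ^ ℓ)).map (aeval (shiftL F))

theorem shiftL_pow_mem_omegaSet {f : F[X]} {s : ℕ → F} (hs : s ∈ OmegaSet f) (ℓ : ℕ) :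
    (shiftL F ^ ℓ) s ∈ OmegaSet f := by
  have hs : polyL f s = 0 := hs
  show polyL f ((shiftL F ^ ℓ) s) = 0
  rw [← Module.End.mul_apply, (commute_polyL_shiftL_pow f ℓ).eq, Module.End.mul_apply, hs,
    map_zero]

variable {ι : Type*} [Fintype ι] {f : ι → F[X]} {s t : ι → ℕ → F}

theorem shiftL_pow_sum_eq_sum_iff (hf : Pairwise fun i j => IsCoprime (f i) (f j))
    (hs : ∀ i, s i ∈ OmegaSet (f i)) (ht : ∀ i, t i ∈ OmegaSet (f i)) (ℓ : ℕ) :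
    (shiftL F ^ ℓ) (∑ i, s i) = ∑ i, t i ↔ ∀ i, (shiftL F ^ ℓ) (s i) = t i := by
  rw [map_sum]
  refine ⟨fun h => congrFun ?_, fun h => Finset.sum_congr rfl fun i _ => h i⟩
  exact (iSupIndep_ker_aeval (shiftL F) hf).eq_of_sum_eq_sum
    (fun i => shiftL_pow_mem_omegaSet (hs i) ℓ) ht h

theorem shiftEquiv_sum_iff (hf : Pairwise fun i j => IsCoprime (f i) (f j))
    (hs : ∀ i, s i ∈ OmegaSet (f i)) (ht : ∀ i, t i ∈ OmegaSet (f i)) {e : ι → ℕ}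
    (he : ∀ i, Function.Periodic (s i) (e i)) :
    ShiftEquiv (∑ i, s i) (∑ i, t i) ↔ ∃ ℓ : ι → ℕ, (∀ i, (shiftL F ^ ℓ i) (s i) = t i) ∧
      ∀ i j, (Nat.gcd (e i) (e j) : ℤ) ∣ (ℓ i : ℤ) - ℓ j := by
  constructor
  · rintro ⟨ℓ, hℓ⟩
    exact ⟨fun _ => ℓ, (shiftL_pow_sum_eq_sum_iff hf hs ht ℓ).mp hℓ.symm, fun i j => by simp⟩
  · rintro ⟨ℓ, hℓ, hgcd⟩
    obtain ⟨n, hn⟩ := Nat.exists_modEq_of_modEq_gcd Finset.univ e ℓ fun i _ j _ =>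
      Nat.modEq_iff_dvd.mpr (Nat.gcd_comm (e i) (e j) ▸ hgcd j i)
    refine ⟨n, ((shiftL_pow_sum_eq_sum_iff hf hs ht n).mpr fun i => ?_).symm⟩
    rw [(he i).shiftL_pow_eq (hn i (Finset.mem_univ i)), hℓ i]

end LinearRecurringSequences

theorem stmt16_general {F : Type*} [Field F] (k : ℕ)
    (g : Fin k → Polynomial F) (b : Fin k → ℕ)
    (hmonic : ∀ i, (g i).Monic) (hirr : ∀ i, Irreducible (g i))
    (hdist : Function.Injective g)
    (sc sc' : Fin k → (ℕ → F))
    (hsc : ∀ i, sc i ∈ OmegaSet ((g i) ^ (b i)))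
    (hsc' : ∀ i, sc' i ∈ OmegaSet ((g i) ^ (b i)))
    (e : Fin k → ℕ) (he : ∀ i, IsLeastPeriod (sc i) (e i)) :
    (∀ ℓ : ℕ, (shiftL F ^ ℓ) (∑ i, sc i) = ∑ i, sc' i ↔
      ∀ i, (shiftL F ^ ℓ) (sc i) = sc' i) ∧
    (ShiftEquiv (∑ i, sc i) (∑ i, sc' i) ↔
      ∃ ℓ : Fin k → ℕ, (∀ i, (shiftL F ^ (ℓ i)) (sc i) = sc' i) ∧
        ∀ i j, ((Nat.gcd (e i) (e j) : ℤ)) ∣ ((ℓ i : ℤ) - (ℓ j : ℤ))) := by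
  have hcop : Pairwise fun i j => IsCoprime (g i ^ b i) (g j ^ b j) := fun i j hij =>
    (isCoprime_of_irreducible_of_monic (hirr i) (hirr j) (hmonic i) (hmonic j)
      (hdist.ne hij)).pow
  exact ⟨shiftL_pow_sum_eq_sum_iff hcop hsc hsc',
    shiftEquiv_sum_iff hcop hsc hsc' fun i => (he i).2.1⟩

/-- for `s = s₁ + ⋯ + s_k`, `s'' = s₁' + ⋯ + s_k'` with nonzero
`sᵢ, sᵢ' ∈ Ω(gᵢ^{bᵢ})` and `eᵢ` the least period of `sᵢ`:
(a) `L^ℓ s = s''` iff `L^ℓ sᵢ = sᵢ'` for all `i`; and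
(b) `s`, `s''` are shift equivalent iff there are `ℓᵢ ≥ 0` with `L^{ℓᵢ} sᵢ = sᵢ'` for all
`i` and `gcd(eᵢ,eⱼ) ∣ ℓᵢ − ℓⱼ` for all `i, j`. -/
theorem stmt16 {F : Type*} [Field F] [Fintype F] (k : ℕ)
    (g : Fin k → Polynomial F) (b : Fin k → ℕ)
    (hmonic : ∀ i, (g i).Monic) (hirr : ∀ i, Irreducible (g i))
    (hg0 : ∀ i, (g i).coeff 0 ≠ 0) (hdist : Function.Injective g)
    (hb : ∀ i, 1 ≤ b i)
    (sc sc' : Fin k → (ℕ → F))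
    (hsc : ∀ i, sc i ∈ OmegaSet ((g i) ^ (b i)))
    (hsc' : ∀ i, sc' i ∈ OmegaSet ((g i) ^ (b i)))
    (hscne : ∀ i, sc i ≠ 0) (hscne' : ∀ i, sc' i ≠ 0)
    (e : Fin k → ℕ) (he : ∀ i, IsLeastPeriod (sc i) (e i)) :
    (∀ ℓ : ℕ, (shiftL F ^ ℓ) (∑ i, sc i) = ∑ i, sc' i ↔
      ∀ i, (shiftL F ^ ℓ) (sc i) = sc' i) ∧
    (ShiftEquiv (∑ i, sc i) (∑ i, sc' i) ↔
      ∃ ℓ : Fin k → ℕ, (∀ i, (shiftL F ^ (ℓ i)) (sc i) = sc' i) ∧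
        ∀ i j, ((Nat.gcd (e i) (e j) : ℤ)) ∣ ((ℓ i : ℤ) - (ℓ j : ℤ))) :=
  stmt16_general k g b hmonic hirr hdist sc sc' hsc hsc' e he
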